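/- arXiv:2509.11150 — 6 statements merged into one kernel-verified Lean document; each statement's English description precedes it below -/
import Mathlib

section
/- Let M be a left A-module. Then M is codivisorial if and only if for every nonzero element x ∈ M the left annihilator ideal Ann_A(x) = {a ∈ A : ax = 0} is a quasidivisorial left ideal of A. -/
open scoped TensorProduct

universe u

namespace PseudoKrull

section Defs

variable (R : Type u) [CommRing R] (A : Type u) [Ring A] [Algebra R A]

/-- `P` is a prime ideal of `R` of height `1`. -/
def IsHeightOnePrime (P : Ideal R) : Prop :=
  ∃ h : P.IsPrime, Order.height (⟨P, h⟩ : PrimeSpectrum R) = 1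

/-- `P` is a prime ideal of `R` of height `≤ 1`. -/
def IsHeightLEOnePrime (P : Ideal R) : Prop :=
  ∃ h : P.IsPrime, Order.height (⟨P, h⟩ : PrimeSpectrum R) ≤ 1

/-- `R` is a pseudo-noetherian commutative ring: for every `a ∈ R` the set of prime ideals
minimal among those containing `a` is finite, and the localization at each of them is
noetherian. -/
def IsPseudoNoetherianRing : Prop :=
  ∀ a : R, (Ideal.span {a} : Ideal R).minimalPrimes.Finite ∧
    ∀ P ∈ (Ideal.span {a} : Ideal R).minimalPrimes, ∀ (_ : P.IsPrime),
      IsNoetherianRing (Localization P.primeCompl)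

/-- `A` has no nonzero nilpotent two-sided ideals. -/
def HasNoNilpotentIdeals : Prop :=
  ∀ I : TwoSidedIdeal A,
    (∃ n : ℕ, 0 < n ∧ ∀ f : Fin n → A, (∀ i, f i ∈ I) → (List.ofFn f).prod = 0) →
    ∀ x ∈ I, x = (0 : A)

/-- `A` is a pseudo-noetherian order over `R`: a reduced `R`-algebra, torsion-free as an
`R`-module, whose localization at every prime of height `≤ 1` is noetherian. -/
structure IsPseudoNoetherianOrder : Prop where
  noNilpotentIdeals : HasNoNilpotentIdeals A
  torsionFree : ∀ x : A, x ≠ 0 → ∀ r ∈ nonZeroDivisors R, r • x ≠ 0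
  locNoetherian : ∀ P : Ideal R, IsHeightLEOnePrime R P → ∀ (_ : P.IsPrime),
    IsNoetherianRing ((Localization P.primeCompl) ⊗[R] A)

/-- `QA = Q ⊗_R A`, where `Q` is the total ring of fractions of `R`. -/
abbrev QA : Type u := (Localization (nonZeroDivisors R)) ⊗[R] A

/-- The canonical map `A → Q ⊗_R A`. -/
noncomputable def inc : A →ₐ[R] QA R A := Algebra.TensorProduct.includeRight

/-- `M` belongs to the class `𝒳`: the localization `M_P` vanishes for every height-one prime
`P` of `R`; equivalently, every element of `M` is annihilated by some `r ∉ P`, for every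
height-one prime `P`. -/
def MemX (M : Type u) [AddCommGroup M] [Module A M] : Prop :=
  ∀ P : Ideal R, IsHeightOnePrime R P → ∀ x : M, ∃ r ∉ P, algebraMap R A r • x = 0

/-- `M` is codivisorial: its only submodule lying in `𝒳` is `0`. -/
def Codivisorial (M : Type u) [AddCommGroup M] [Module A M] : Prop :=
  ∀ N : Submodule A M, MemX R A N → N = ⊥

/-- The set `𝔞_𝒫 ⊆ QA` attached to a left ideal `𝔞` of `A`. -/
def idealClosure (a : Ideal A) : Set (QA R A) :=
  {x | ∀ P : Ideal R, IsHeightOnePrime R P → ∃ r ∉ P, r • x ∈ (inc R A) '' (a : Set A)}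

/-- A left ideal `𝔞` of `A` is quasidivisorial if `𝔞 = A ∩ 𝔞_𝒫`. -/
def Quasidivisorial (a : Ideal A) : Prop :=
  ∀ x : A, (inc R A x ∈ idealClosure R A a ↔ x ∈ a)

/-- `A` is pseudo-krullian: it is divisorial as an `R`-module, i.e.
`A = {x ∈ QA : ∀ P ∈ 𝒫 ∃ r ∈ R∖P, r x ∈ A}`. -/
def IsPseudoKrullian : Prop :=
  ∀ x : QA R A, (∀ P : Ideal R, IsHeightOnePrime R P → ∃ r ∉ P, r • x ∈ Set.range (inc R A)) →
    x ∈ Set.range (inc R A)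

/-- `M` is a closed module: `Hom_A(X, M) = 0` and `Ext¹_A(X, M) = 0` for every `X ∈ 𝒳`
(the vanishing of `Ext¹` is expressed by the splitting of every extension of a module
of `𝒳` by `M`). -/
def Closed (M : Type u) [AddCommGroup M] [Module A M] : Prop :=
  (∀ (X : Type u) [AddCommGroup X] [Module A X], MemX R A X → ∀ f : X →ₗ[A] M, f = 0) ∧
  (∀ (Y : Type u) [AddCommGroup Y] [Module A Y] (ι : M →ₗ[A] Y), Function.Injective ι →
    MemX R A (Y ⧸ LinearMap.range ι) → ∃ π : Y →ₗ[A] M, π.comp ι = LinearMap.id)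

/-- A two-sided ideal `𝔓` of `A` is prime. -/
def IsPrimeTwoSided (𝔓 : TwoSidedIdeal A) : Prop :=
  (𝔓 : Set A) ≠ Set.univ ∧
    ∀ I J : TwoSidedIdeal A, (∀ x ∈ I, ∀ y ∈ J, x * y ∈ 𝔓) → I ≤ 𝔓 ∨ J ≤ 𝔓

/-- `𝔓 ∈ 𝒫(A)`: a prime two-sided ideal of `A` whose contraction to `R` is the height-one
prime `P`. -/
def MemPA (𝔓 : TwoSidedIdeal A) (P : Ideal R) : Prop :=
  IsPrimeTwoSided A 𝔓 ∧ IsHeightOnePrime R P ∧ ∀ r : R, algebraMap R A r ∈ 𝔓 ↔ r ∈ P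

/-- `U` is (a copy of) the simple module `U_𝔓`: the unique simple `A_P`-module with
annihilator `𝔓` (where `P = 𝔓 ∩ R`). -/
def IsUP (𝔓 : TwoSidedIdeal A) (P : Ideal R) (U : Type u) [AddCommGroup U] [Module A U] :
    Prop :=
  IsSimpleModule A U ∧ (∀ a : A, (∀ u : U, a • u = 0) ↔ a ∈ 𝔓) ∧
    ∀ r ∉ P, Function.Bijective fun u : U => algebraMap R A r • u

/-- `ι : M → E` presents `E` as an injective envelope of `M`. -/
def IsInjectiveEnvelope (M E : Type u) [AddCommGroup M] [Module A M] [AddCommGroup E]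
    [Module A E] (ι : M →ₗ[A] E) : Prop :=
  Module.Injective A E ∧ Function.Injective ι ∧
    ∀ N : Submodule A E, N ≠ ⊥ → N ⊓ LinearMap.range ι ≠ ⊥

/-- `M` is an indecomposable module. -/
def IndecomposableModule (M : Type u) [AddCommGroup M] [Module A M] : Prop :=
  Nontrivial M ∧ ∀ N N' : Submodule A M, IsCompl N N' → N = ⊥ ∨ N' = ⊥

/-- The left annihilator ideal of an element `x` of an `A`-module. -/
def leftAnn (M : Type u) [AddCommGroup M] [Module A M] (x : M) : Ideal A where
  carrier := {a : A | a • x = 0}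
  add_mem' := by
    intro a b ha hb
    simp only [Set.mem_setOf_eq] at *
    rw [add_smul, ha, hb, add_zero]
  zero_mem' := by simp only [Set.mem_setOf_eq, zero_smul]
  smul_mem' := by
    intro c a ha
    simp only [Set.mem_setOf_eq, smul_eq_mul] at *
    rw [mul_smul, ha, smul_zero]

/-- The annihilator of a module `M`, regarded as a left ideal of `A`. -/
def modAnn (M : Type u) [AddCommGroup M] [Module A M] : Ideal A where
  carrier := {a : A | ∀ y : M, a • y = 0}
  add_mem' := by
    intro a b ha hb
    intro y
    rw [add_smul, ha, hb, add_zero]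
  zero_mem' := by intro y; simp
  smul_mem' := by
    intro c a ha y
    simp only [smul_eq_mul]
    rw [mul_smul, ha, smul_zero]

/-- A homomorphism of `A`-modules is a pseudo-isomorphism if its localization at every
height-one prime `P` of `R` is an isomorphism. -/
def IsPseudoIso {M N : Type u} [AddCommGroup M] [Module R M] [Module A M] [IsScalarTower R A M]
    [AddCommGroup N] [Module R N] [Module A N] [IsScalarTower R A N] (f : M →ₗ[A] N) : Prop :=
  ∀ P : Ideal R, IsHeightOnePrime R P → ∀ (_ : P.IsPrime),
    Function.Bijective (LocalizedModule.map P.primeCompl (f.restrictScalars R))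

/-- The submodule of torsion elements. -/
def torsSub (M : Type u) [AddCommGroup M] [Module A M] : Submodule A M where
  carrier := {x : M | ∃ r ∈ nonZeroDivisors R, algebraMap R A r • x = 0}
  add_mem' := by
    rintro x y ⟨r, hr, hx⟩ ⟨s, hs, hy⟩
    refine ⟨r * s, mul_mem hr hs, ?_⟩
    have h1 : algebraMap R A (r * s) • x = 0 := by
      rw [mul_comm, map_mul, mul_smul, hx, smul_zero]
    have h2 : algebraMap R A (r * s) • y = 0 := by
      rw [map_mul, mul_smul, hy, smul_zero]
    rw [smul_add, h1, h2, add_zero]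
  zero_mem' := ⟨1, one_mem _, smul_zero _⟩
  smul_mem' := by
    rintro a x ⟨r, hr, hx⟩
    refine ⟨r, hr, ?_⟩
    rw [← mul_smul, Algebra.commutes, mul_smul, hx, smul_zero]

/-- The largest submodule of `M` belonging to `𝒳` (the sum of all such submodules). -/
def xTorsion (M : Type u) [AddCommGroup M] [Module A M] : Submodule A M :=
  sSup {N : Submodule A M | MemX R A N}

end Defs


/-- Proposition 1.5: a left `A`-module `M` is codivisorial iff for every nonzero `x ∈ M`
the left annihilator ideal `Ann_A x` is quasidivisorial. -/
theorem codivisorial_iff_leftAnn_quasidivisorial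
    (R : Type u) [CommRing R] [IsReduced R] (A : Type u) [Ring A] [Algebra R A]
    (hR : IsPseudoNoetherianRing R) (hA : IsPseudoNoetherianOrder R A)
    (M : Type u) [AddCommGroup M] [Module A M] :
    Codivisorial R A M ↔ ∀ x : M, x ≠ 0 → Quasidivisorial R A (leftAnn A M x) := by
  -- `inc` is injective since `A` is torsion-free over `R`.
  have hloc : IsLocalizedModule (nonZeroDivisors R)
      (TensorProduct.mk R (Localization (nonZeroDivisors R)) A 1) :=
    (isLocalizedModule_iff_isBaseChange (nonZeroDivisors R) (Localization (nonZeroDivisors R))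
      _).2 (TensorProduct.isBaseChange R A (Localization (nonZeroDivisors R)))
  have hinc_eq : ∀ a : A, inc R A a =
      TensorProduct.mk R (Localization (nonZeroDivisors R)) A 1 a := fun a => rfl
  have hinj : Function.Injective (inc R A) := by
    intro a b hab
    have h0 : TensorProduct.mk R (Localization (nonZeroDivisors R)) A 1 (a - b) = 0 := by
      rw [map_sub, ← hinc_eq, ← hinc_eq, hab, sub_self]
    rw [IsLocalizedModule.eq_zero_iff (nonZeroDivisors R)] at h0
    obtain ⟨s, hs⟩ := h0
    by_contra hne
    exact hA.torsionFree (a - b) (sub_ne_zero.2 hne) s s.2 hs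
  have hsmul : ∀ (r : R) (a : A), r • inc R A a = inc R A (algebraMap R A r * a) := by
    intro r a
    rw [← Algebra.smul_def, map_smul]
  constructor
  · -- codivisorial → annihilators quasidivisorial
    intro hcod x hx a
    constructor
    · intro hcl
      -- consider the cyclic submodule generated by `a • x`
      by_contra hax
      have hax' : a • x ≠ 0 := hax
      set N : Submodule A M := Submodule.span A {a • x} with hN
      have hNX : MemX R A N := by
        intro P hP ⟨y, hy⟩
        obtain ⟨r, hr, b, hb, hrb⟩ := hcl P hP
        rw [hsmul] at hrb
        have hb' : algebraMap R A r * a ∈ leftAnn A M x := hinj hrb ▸ hb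
        have hax0 : algebraMap R A r • (a • x) = 0 := by
          have := hb'
          simpa [leftAnn, mul_smul] using this
        refine ⟨r, hr, ?_⟩
        -- y ∈ span {a • x}
        rw [hN, Submodule.mem_span_singleton] at hy
        obtain ⟨c, hc⟩ := hy
        have : algebraMap R A r • y = 0 := by
          rw [← hc, ← mul_smul, Algebra.commutes, mul_smul, hax0, smul_zero]
        ext
        simpa using this
      have : N = ⊥ := hcod N hNX
      have : a • x ∈ (⊥ : Submodule A M) := this ▸ Submodule.mem_span_singleton_self _
      exact hax' (by simpa using this)
    · intro ha P hP
      refine ⟨1, fun h => hP.1.ne_top (Ideal.eq_top_of_isUnit_mem _ h isUnit_one), ?_⟩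
      rw [one_smul]
      exact ⟨a, ha, rfl⟩
  · -- annihilators quasidivisorial → codivisorial
    intro hann N hNX
    rw [Submodule.eq_bot_iff]
    intro y hy
    by_contra hy0
    have h1 : inc R A 1 ∈ idealClosure R A (leftAnn A M y) := by
      intro P hP
      obtain ⟨r, hr, hry⟩ := hNX P hP ⟨y, hy⟩
      refine ⟨r, hr, ?_⟩
      rw [hsmul, mul_one]
      refine ⟨algebraMap R A r, ?_, rfl⟩
      show algebraMap R A r • y = 0
      have := congrArg (Submodule.subtype N) hry
      simpa using this
    have : (1 : A) ∈ leftAnn A M y := (hann y hy0 1).1 h1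
    have : (1 : A) • y = 0 := this
    rw [one_smul] at this
    exact hy0 this

end PseudoKrull
end

section
/- If M is a codivisorial left A-module, then its annihilator Ann_A(M) = {a ∈ A : aM = 0}, regarded as a left ideal of A, is quasidivisorial. -/
open scoped TensorProduct

universe u

namespace PseudoKrull

/-- Corollary 1.6(1): if `M` is codivisorial then `Ann_A M`, regarded as a left ideal of `A`,
is quasidivisorial. -/
theorem quasidivisorial_modAnn_of_codivisorial
    (R : Type u) [CommRing R] [IsReduced R] (A : Type u) [Ring A] [Algebra R A]
    (hR : IsPseudoNoetherianRing R) (hA : IsPseudoNoetherianOrder R A)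
    (M : Type u) [AddCommGroup M] [Module A M] (hM : Codivisorial R A M) :
    Quasidivisorial R A (modAnn A M) := by
  haveI : IsLocalizedModule (nonZeroDivisors R)
      (TensorProduct.mk R (Localization (nonZeroDivisors R)) A 1) :=
    (isLocalizedModule_iff_isBaseChange (nonZeroDivisors R)
      (Localization (nonZeroDivisors R)) _).mpr
      (TensorProduct.isBaseChange R A (Localization (nonZeroDivisors R)))
  have hinj : Function.Injective (inc R A) := by
    intro u v huv
    have h0 : (TensorProduct.mk R (Localization (nonZeroDivisors R)) A 1) (u - v) = 0 := by
      have : inc R A u - inc R A v = 0 := by rw [huv, sub_self]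
      simpa [map_sub, TensorProduct.mk_apply, TensorProduct.tmul_sub, inc,
        Algebra.TensorProduct.includeRight_apply] using this
    rw [IsLocalizedModule.eq_zero_iff (nonZeroDivisors R)] at h0
    obtain ⟨s, hs⟩ := h0
    by_contra hne
    exact hA.torsionFree (u - v) (sub_ne_zero.mpr hne) s s.2
      (by rwa [Submonoid.smul_def] at hs)
  intro x
  constructor
  · intro hx
    have key : ∀ P : Ideal R, IsHeightOnePrime R P → ∃ r ∉ P, ∀ y : M,
        algebraMap R A r • (x • y) = 0 := by
      intro P hP
      obtain ⟨r, hr, a, ha, heq⟩ := hx P hP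
      have h1 : inc R A a = inc R A (algebraMap R A r * x) := by
        rw [heq]
        show (r • ((1 : Localization (nonZeroDivisors R)) ⊗ₜ[R] x) : QA R A)
          = (1 : Localization (nonZeroDivisors R)) ⊗ₜ[R] (algebraMap R A r * x)
        rw [← TensorProduct.tmul_smul, Algebra.smul_def]
      have h2 : a = algebraMap R A r * x := hinj h1
      refine ⟨r, hr, fun y => ?_⟩
      have := ha y
      rw [h2] at this
      rwa [smul_smul]
    set N : Submodule A M := Submodule.span A (Set.range fun y : M => x • y) with hNdef
    have hN : MemX R A N := by
      intro P hP z
      obtain ⟨r, hr, hr0⟩ := key P hP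
      refine ⟨r, hr, ?_⟩
      have hz : algebraMap R A r • (z : M) = 0 := by
        refine Submodule.span_induction
          (p := fun m _ => algebraMap R A r • m = 0) ?_ ?_ ?_ ?_ z.2
        · rintro m ⟨y, rfl⟩; exact hr0 y
        · simp
        · intro m₁ m₂ _ _ h1 h2; rw [smul_add, h1, h2, add_zero]
        · intro a m _ h1
          rw [smul_smul, Algebra.commutes, ← smul_smul, h1, smul_zero]
      exact Subtype.ext (by simpa using hz)
    have hbot := hM N hN
    intro y
    have hin : x • y ∈ N := Submodule.subset_span ⟨y, rfl⟩
    rw [hbot] at hin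
    simpa using hin
  · intro hx P hP
    obtain ⟨hp, -⟩ := hP
    refine ⟨1, fun h1 => hp.ne_top (Ideal.eq_top_of_isUnit_mem P h1 isUnit_one), ?_⟩
    rw [one_smul]
    exact ⟨x, hx, rfl⟩

end PseudoKrull
end

section
/- Let M be a left A-module, M_𝒳 its largest submodule belonging to 𝒳 (the sum of all submodules lying in 𝒳), M' = M/M_𝒳, E an injective envelope of M', and c(M) ⊆ E the preimage under E → E/M' of the largest submodule of E/M' belonging to 𝒳. Then c(M) is a closed left A-module and the composite map M → M' ⊆ c(M) is a pseudo-isomorphism. -/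
open scoped TensorProduct

universe u

namespace PseudoKrull

section AuxLemmas

variable (R : Type u) [CommRing R] (A : Type u) [Ring A] [Algebra R A]
variable (M : Type u) [AddCommGroup M] [Module A M]

/-- Elementwise description of the largest `𝒳`-submodule. -/
def xTors : Submodule A M where
  carrier := {x | ∀ P : Ideal R, IsHeightOnePrime R P → ∃ r ∉ P, algebraMap R A r • x = 0}
  add_mem' := by
    intro x y hx hy P hP
    obtain ⟨r, hr, hrx⟩ := hx P hP
    obtain ⟨s, hs, hsy⟩ := hy P hP
    obtain ⟨hp, -⟩ := hP
    refine ⟨r * s, fun h => ((hp.mem_or_mem h).elim hr hs), ?_⟩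
    have h1 : algebraMap R A (r * s) • x = 0 := by
      rw [mul_comm, map_mul, mul_smul, hrx, smul_zero]
    have h2 : algebraMap R A (r * s) • y = 0 := by
      rw [map_mul, mul_smul, hsy, smul_zero]
    rw [smul_add, h1, h2, add_zero]
  zero_mem' := by
    intro P hP
    exact ⟨1, fun h => hP.1.ne_top ((Ideal.eq_top_iff_one P).mpr h), smul_zero _⟩
  smul_mem' := by
    intro a x hx P hP
    obtain ⟨r, hr, h0⟩ := hx P hP
    refine ⟨r, hr, ?_⟩
    rw [← mul_smul, Algebra.commutes, mul_smul, h0, smul_zero]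

lemma xTorsion_eq_xTors : xTorsion R A M = xTors R A M := by
  apply le_antisymm
  · apply sSup_le
    intro N hN x hx P hP
    obtain ⟨r, hr, h0⟩ := hN P hP ⟨x, hx⟩
    exact ⟨r, hr, congrArg Subtype.val h0⟩
  · apply le_sSup
    intro P hP x
    obtain ⟨r, hr, h0⟩ := x.2 P hP
    exact ⟨r, hr, Subtype.ext h0⟩

lemma mem_xTorsion_iff (x : M) :
    x ∈ xTorsion R A M ↔
      ∀ P : Ideal R, IsHeightOnePrime R P → ∃ r ∉ P, algebraMap R A r • x = 0 := by
  rw [xTorsion_eq_xTors]; exact Iff.rfl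

/-- `M / M_𝒳` is codivisorial. -/
lemma xTorsion_quotient_eq_bot :
    xTorsion R A (M ⧸ xTorsion R A M) = ⊥ := by
  rw [eq_bot_iff]
  intro x hx
  rw [mem_xTorsion_iff] at hx
  obtain ⟨m, rfl⟩ := (xTorsion R A M).mkQ_surjective x
  rw [Submodule.mem_bot, Submodule.mkQ_apply, Submodule.Quotient.mk_eq_zero,
    mem_xTorsion_iff]
  intro P hP
  obtain ⟨r, hr, h0⟩ := hx P hP
  rw [Submodule.mkQ_apply, ← Submodule.Quotient.mk_smul, Submodule.Quotient.mk_eq_zero] at h0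
  rw [mem_xTorsion_iff] at h0
  obtain ⟨s, hs, h1⟩ := h0 P hP
  refine ⟨s * r, fun h => ((hP.1.mem_or_mem h).elim hs hr), ?_⟩
  rw [map_mul, mul_smul]
  exact h1

end AuxLemmas


section Stmt6

variable (R : Type u) [CommRing R] (A : Type u) [Ring A] [Algebra R A]
variable (M : Type u) [AddCommGroup M] [Module R M] [Module A M] [IsScalarTower R A M]
variable (E : Type u) [AddCommGroup E] [Module R E] [Module A E] [IsScalarTower R A E]
variable (ι : (M ⧸ xTorsion R A M) →ₗ[A] E)

/-- `c(M)`: the preimage in `E = E(M/M_𝒳)` of the largest submodule of `E/(M/M_𝒳)`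
belonging to `𝒳`. -/
noncomputable def cOf : Submodule A E :=
  Submodule.comap (LinearMap.range ι).mkQ (xTorsion R A (E ⧸ LinearMap.range ι))

/-- The composite map `M → M/M_𝒳 ⊆ c(M)`. -/
noncomputable def toCOf : M →ₗ[A] (cOf R A M E ι) :=
  LinearMap.codRestrict (cOf R A M E ι) (ι.comp (xTorsion R A M).mkQ) (fun x => by
    have h0 : (LinearMap.range ι).mkQ (ι ((xTorsion R A M).mkQ x)) = 0 := by
      rw [Submodule.mkQ_apply]
      exact (Submodule.Quotient.mk_eq_zero _).mpr ⟨(xTorsion R A M).mkQ x, rfl⟩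
    show (ι.comp (xTorsion R A M).mkQ) x ∈ cOf R A M E ι
    rw [cOf, Submodule.mem_comap, LinearMap.comp_apply, h0]
    exact zero_mem _)

/-- Corollary 1.8: `c(M)` is closed and the composite `M → M/M_𝒳 ⊆ c(M)` is a
pseudo-isomorphism (so that `c(M) ≃ GFM`). -/
theorem cOf_closed_and_pseudoIso
    [IsReduced R]
    (hR : IsPseudoNoetherianRing R) (hA : IsPseudoNoetherianOrder R A)
    (hE : IsInjectiveEnvelope A (M ⧸ xTorsion R A M) E ι) :
    Closed R A (cOf R A M E ι) ∧ IsPseudoIso R A (toCOf R A M E ι) := by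
  obtain ⟨hInj, hιinj, hEss⟩ := hE
  have hCmem : ∀ x : E, x ∈ cOf R A M E ι ↔
      (LinearMap.range ι).mkQ x ∈ xTorsion R A (E ⧸ LinearMap.range ι) := fun x => Iff.rfl
  constructor
  · constructor
    · -- Hom(X, c(M)) = 0 for X ∈ 𝒳
      intro X _ _ hX f
      have hinter : LinearMap.range ((cOf R A M E ι).subtype ∘ₗ f) ⊓ LinearMap.range ι = ⊥ := by
        rw [eq_bot_iff]
        rintro y ⟨hy1, hy2⟩
        obtain ⟨x, hx⟩ := hy1
        obtain ⟨m', hm'⟩ := hy2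
        have hy0 : ∀ Pp : Ideal R, IsHeightOnePrime R Pp →
            ∃ r ∉ Pp, algebraMap R A r • y = 0 := by
          intro Pp hPp
          obtain ⟨r, hr, h0⟩ := hX Pp hPp x
          refine ⟨r, hr, ?_⟩
          rw [← hx, ← map_smul, h0, map_zero]
        have hm'0 : m' ∈ xTorsion R A (M ⧸ xTorsion R A M) := by
          rw [mem_xTorsion_iff]
          intro Pp hPp
          obtain ⟨r, hr, h0⟩ := hy0 Pp hPp
          exact ⟨r, hr, hιinj (by rw [map_smul, hm', h0, map_zero])⟩
        rw [xTorsion_quotient_eq_bot, Submodule.mem_bot] at hm'0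
        rw [Submodule.mem_bot, ← hm', hm'0, map_zero]
      have hbot : LinearMap.range ((cOf R A M E ι).subtype ∘ₗ f) = ⊥ := by
        by_contra h
        exact hEss _ h hinter
      ext x
      have hx0 : (f x : E) = 0 := by
        have hmem : (f x : E) ∈ LinearMap.range ((cOf R A M E ι).subtype ∘ₗ f) := ⟨x, rfl⟩
        rw [hbot, Submodule.mem_bot] at hmem
        exact hmem
      simpa using hx0
    · -- Ext¹(X, c(M)) = 0 : every extension with quotient in 𝒳 splits
      intro Y _ _ ι' hι' hX
      obtain ⟨h, hh⟩ := hInj.out ι' hι' (cOf R A M E ι).subtype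
      have hmem : ∀ y : Y, h y ∈ cOf R A M E ι := by
        intro y
        rw [hCmem, mem_xTorsion_iff]
        intro P hP
        obtain ⟨r, hr, h0⟩ := hX P hP (Submodule.Quotient.mk y)
        rw [← Submodule.Quotient.mk_smul, Submodule.Quotient.mk_eq_zero] at h0
        obtain ⟨c, hc⟩ := h0
        have h1 : algebraMap R A r • h y = (c : E) := by
          rw [← map_smul, ← hc]
          exact hh c
        have h2 := (hCmem (c : E)).mp c.2
        rw [mem_xTorsion_iff] at h2
        obtain ⟨s, hs, h3⟩ := h2 P hP
        refine ⟨s * r, fun hm => ((hP.1.mem_or_mem hm).elim hs hr), ?_⟩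
        rw [map_mul, mul_smul, ← map_smul ((LinearMap.range ι).mkQ), h1]
        exact h3
      refine ⟨h.codRestrict _ hmem, ?_⟩
      ext c
      simp only [LinearMap.comp_apply, LinearMap.id_apply, LinearMap.codRestrict_apply]
      exact hh c
  · -- the pseudo-isomorphism
    intro P hP hPrime
    have hker : ∀ m : M, toCOf R A M E ι m = 0 ↔ m ∈ xTorsion R A M := by
      intro m
      constructor
      · intro hm
        have h1 : ((toCOf R A M E ι m : cOf R A M E ι) : E) = ((0 : cOf R A M E ι) : E) :=
          congrArg Subtype.val hm
        have h2 : (xTorsion R A M).mkQ m = 0 := hιinj (by rw [map_zero]; exact h1)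
        rwa [Submodule.mkQ_apply, Submodule.Quotient.mk_eq_zero] at h2
      · intro hm
        refine Subtype.ext ?_
        show ι ((xTorsion R A M).mkQ m) = 0
        rw [Submodule.mkQ_apply, (Submodule.Quotient.mk_eq_zero _).mpr hm, map_zero]
    constructor
    · rw [← LinearMap.ker_eq_bot, LinearMap.ker_eq_bot']
      intro z
      induction z using LocalizedModule.induction_on with
      | _ m s =>
        intro hz
        rw [LocalizedModule.map_mk,
          show (0 : LocalizedModule P.primeCompl (cOf R A M E ι)) = LocalizedModule.mk 0 1 from
            (LocalizedModule.zero_mk 1).symm,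
          LocalizedModule.mk_eq] at hz
        obtain ⟨u, hu⟩ := hz
        rw [one_smul, smul_zero, smul_zero] at hu
        have h4 : toCOf R A M E ι ((u : R) • m) = 0 := by
          have := map_smul ((toCOf R A M E ι).restrictScalars R) (u : R) m
          rw [Submonoid.smul_def] at hu
          exact this.trans hu
        rw [hker, mem_xTorsion_iff] at h4
        obtain ⟨r, hr, h5⟩ := h4 P hP
        rw [algebraMap_smul] at h5
        rw [show (0 : LocalizedModule P.primeCompl M) = LocalizedModule.mk 0 1 from
            (LocalizedModule.zero_mk 1).symm, LocalizedModule.mk_eq]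
        refine ⟨⟨r, hr⟩ * u, ?_⟩
        rw [one_smul, smul_zero, smul_zero, Submonoid.smul_def, Submonoid.coe_mul, mul_smul]
        exact h5
    · intro z
      induction z using LocalizedModule.induction_on with
      | _ c s =>
        have hc := (hCmem (c : E)).mp c.2
        rw [mem_xTorsion_iff] at hc
        obtain ⟨r, hr, h0⟩ := hc P hP
        rw [← map_smul, Submodule.mkQ_apply, Submodule.Quotient.mk_eq_zero] at h0
        obtain ⟨mb, hmb⟩ := h0
        obtain ⟨m, rfl⟩ := (xTorsion R A M).mkQ_surjective mb
        have hfm : toCOf R A M E ι m = r • c := by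
          refine Subtype.ext ?_
          show ι ((xTorsion R A M).mkQ m) = ((r • c : cOf R A M E ι) : E)
          rw [hmb, algebraMap_smul]
          rfl
        refine ⟨LocalizedModule.mk m (⟨r, hr⟩ * s), ?_⟩
        rw [LocalizedModule.map_mk,
          show ((toCOf R A M E ι).restrictScalars R) m = r • c from hfm,
          LocalizedModule.mk_eq]
        refine ⟨1, ?_⟩
        rw [one_smul, one_smul, Submonoid.smul_def, Submonoid.smul_def, Submonoid.coe_mul,
          mul_smul]
        exact smul_comm _ _ _

end Stmt6

end PseudoKrull
end

section
/- Let M be a torsion left A-module. Then for every x ∈ M the family of images (x/1 ∈ M_P)_{P ∈ 𝒫} has only finitely many nonzero components, so the canonical map κ : M → ⊕_{P ∈ 𝒫} M_P into the direct sum of the localizations is well-defined; moreover κ is a pseudo-isomorphism, i.e., the localization κ_P is an isomorphism for every P ∈ 𝒫. -/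
open scoped TensorProduct

universe u

namespace PseudoKrull

section Stmt8

variable (R : Type u) [CommRing R]

/-- The complement of a height-one prime, as a submonoid. -/
noncomputable def pc (P : {P : Ideal R // IsHeightOnePrime R P}) : Submonoid R :=
  @Ideal.primeCompl R _ P.1 P.2.choose


section AuxLemmas

variable {R : Type u} [CommRing R]

lemma mem_pc_iff {P : {P : Ideal R // IsHeightOnePrime R P}} {r : R} :
    r ∈ pc R P ↔ r ∉ P.1 := Iff.rfl

lemma minimal_of_lt_heightOne {P q : Ideal R} (hP : IsHeightOnePrime R P) (hq : q.IsPrime)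
    (hlt : q < P) : q ∈ minimalPrimes R := by
  obtain ⟨hPp, hht⟩ := hP
  have hlt' : (⟨q, hq⟩ : PrimeSpectrum R) < ⟨P, hPp⟩ :=
    (PrimeSpectrum.asIdeal_lt_asIdeal _ _).mp hlt
  have h0 : Order.height (⟨q, hq⟩ : PrimeSpectrum R) = 0 := by
    have h1 := (Order.height_le_coe_iff (x := (⟨P, hPp⟩ : PrimeSpectrum R)) (n := 1)).mp
      (by rw [hht, Nat.cast_one]) _ hlt'
    rw [Nat.cast_one] at h1
    exact ENat.lt_one_iff_eq_zero.mp h1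
  have hmin : IsMin (⟨q, hq⟩ : PrimeSpectrum R) := Order.height_eq_zero.mp h0
  rw [minimalPrimes_eq_minimals]
  refine ⟨hq, fun p hp hle => ?_⟩
  exact (PrimeSpectrum.asIdeal_le_asIdeal (⟨q, hq⟩ : PrimeSpectrum R) ⟨p, hp⟩).mp
    (hmin ((PrimeSpectrum.asIdeal_le_asIdeal (⟨p, hp⟩ : PrimeSpectrum R) ⟨q, hq⟩).mp hle))

lemma not_mem_minimal_of_nzd {r : R} (hr : r ∈ nonZeroDivisors R) {q : Ideal R}
    (hq : q ∈ minimalPrimes R) : r ∉ q := by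
  haveI hqp : q.IsPrime := hq.1.1
  intro hrq
  have h1 : algebraMap R (Localization q.primeCompl) r ∈
      IsLocalRing.maximalIdeal (Localization q.primeCompl) := by
    rw [← Localization.AtPrime.map_eq_maximalIdeal]
    exact Ideal.mem_map_of_mem _ hrq
  obtain ⟨n, hn⟩ := (absurd hr (notMem_nonZeroDivisors_of_mem_mem_minimalPrimes hrq hq) :
    ∃ n : ℕ, algebraMap R (Localization q.primeCompl) r ^ n = 0)
  rw [← map_pow] at hn
  obtain ⟨⟨c, hc⟩, hc0⟩ := (IsLocalization.map_eq_zero_iff q.primeCompl _ _).mp hn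
  have hrn : r ^ n ∈ nonZeroDivisors R := pow_mem hr n
  have : c = 0 := mem_nonZeroDivisors_iff_right.mp hrn c hc0
  exact hc (this ▸ q.zero_mem)

lemma heightOne_not_minimalPrimes {P : Ideal R} (hP : IsHeightOnePrime R P) :
    P ∉ minimalPrimes R := by
  obtain ⟨hPp, hht⟩ := hP
  intro h
  rw [minimalPrimes_eq_minimals] at h
  have hmin : IsMin (⟨P, hPp⟩ : PrimeSpectrum R) := by
    intro b hb
    exact (PrimeSpectrum.asIdeal_le_asIdeal (⟨P, hPp⟩ : PrimeSpectrum R) b).mp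
      (h.2 b.2 ((PrimeSpectrum.asIdeal_le_asIdeal b (⟨P, hPp⟩ : PrimeSpectrum R)).mp hb))
  have h0 := Order.height_eq_zero.mpr hmin
  rw [hht] at h0
  exact one_ne_zero h0

lemma heightOne_minimal_span {r : R} (hr : r ∈ nonZeroDivisors R) {P : Ideal R}
    (hP : IsHeightOnePrime R P) (hrP : r ∈ P) :
    P ∈ (Ideal.span {r} : Ideal R).minimalPrimes := by
  refine ⟨⟨hP.choose, by rwa [Ideal.span_le, Set.singleton_subset_iff]⟩, ?_⟩
  rintro q ⟨hqp, hq⟩ hqP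
  rcases eq_or_lt_of_le hqP with heq | hlt
  · exact heq.ge
  · exact absurd (hq (Ideal.subset_span rfl))
      (not_mem_minimal_of_nzd hr (minimal_of_lt_heightOne hP hqp hlt))

lemma mk_one_eq_zero_of_notMem {M : Type u} [AddCommGroup M] [Module R M] {x : M} {r : R}
    (hrx : r • x = 0) {P : {P : Ideal R // IsHeightOnePrime R P}} (hrP : r ∉ P.1) :
    (LocalizedModule.mk x (1 : pc R P) : LocalizedModule (pc R P) M) = 0 := by
  rw [← LocalizedModule.zero_mk (1 : pc R P), LocalizedModule.mk_eq]
  exact ⟨⟨r, hrP⟩, by simp [Submonoid.smul_def, hrx]⟩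

/-- Key lemma: if `Q ≠ P` are height-one primes and `M` is a torsion module, every element of
`M_Q` is killed by some `τ ∉ P`. -/
lemma exists_smul_eq_zero_of_ne {R : Type u} [CommRing R] (hR : IsPseudoNoetherianRing R)
    {M : Type u} [AddCommGroup M] [Module R M]
    (htors : ∀ x : M, ∃ r ∈ nonZeroDivisors R, r • x = 0)
    (P Q : {P : Ideal R // IsHeightOnePrime R P}) (hne : Q ≠ P)
    (η : LocalizedModule (pc R Q) M) :
    ∃ τ : R, τ ∉ P.1 ∧ τ • η = 0 := by
  haveI hQp : Q.1.IsPrime := Q.2.choose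
  haveI hPp : P.1.IsPrime := P.2.choose
  have hQP : ¬ Q.1 ≤ P.1 := by
    intro hle
    rcases eq_or_lt_of_le hle with heq | hlt
    · exact hne (Subtype.ext heq)
    · exact heightOne_not_minimalPrimes Q.2 (minimal_of_lt_heightOne P.2 hQp hlt)
  obtain ⟨t, htQ, htP⟩ := SetLike.not_le_iff_exists.mp hQP
  refine LocalizedModule.induction_on (fun x s => ?_) η
  obtain ⟨r, hr, hrx⟩ := htors x
  by_cases hrQ : r ∈ Q.1
  · have hQmin := heightOne_minimal_span hr Q.2 hrQ
    have hNoeth : IsNoetherianRing (Localization Q.1.primeCompl) := (hR r).2 Q.1 hQmin hQp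
    set L := Localization Q.1.primeCompl with hL
    set φ := algebraMap R L with hφ
    have hm : IsLocalRing.maximalIdeal L ≤ (Ideal.span {φ r}).radical := by
      rw [Ideal.radical_eq_sInf]
      refine le_sInf ?_
      rintro K ⟨hJK, hKp⟩
      have hKm : K ≤ IsLocalRing.maximalIdeal L := IsLocalRing.le_maximalIdeal hKp.ne_top
      have hcomap : Q.1 ≤ K.comap φ := by
        refine hQmin.2 ⟨hKp.comap φ, ?_⟩ ?_
        · rw [Ideal.span_le, Set.singleton_subset_iff]
          exact Ideal.mem_comap.mpr (hJK (Ideal.subset_span rfl))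
        · exact (Ideal.comap_mono hKm).trans_eq Localization.AtPrime.comap_maximalIdeal
      calc IsLocalRing.maximalIdeal L = Ideal.map φ Q.1 :=
            Localization.AtPrime.map_eq_maximalIdeal.symm
        _ ≤ K := Ideal.map_le_iff_le_comap.mpr hcomap
    obtain ⟨n, hn⟩ := Ideal.exists_pow_le_of_le_radical_of_fg hm
      (IsNoetherian.noetherian (IsLocalRing.maximalIdeal L))
    have htm : φ t ∈ IsLocalRing.maximalIdeal L := by
      rw [← Localization.AtPrime.map_eq_maximalIdeal]
      exact Ideal.mem_map_of_mem φ htQ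
    have h2 : φ t ^ (n + 1) ∈ Ideal.span {φ r} := by
      have hle : (IsLocalRing.maximalIdeal L) ^ (n + 1) ≤ Ideal.span {φ r} :=
        (Ideal.pow_le_pow_right (Nat.le_succ n)).trans hn
      exact hle (Ideal.pow_mem_pow htm (n + 1))
    obtain ⟨c, hc⟩ := Ideal.mem_span_singleton.mp h2
    obtain ⟨⟨c0, u⟩, hcu⟩ := IsLocalization.surj (M := Q.1.primeCompl) c
    have heq : φ (t ^ (n + 1) * (u : R)) = φ (r * c0) := by
      rw [map_mul, map_mul, map_pow, hc, mul_assoc, hcu]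
    obtain ⟨v, hv⟩ := IsLocalization.exists_of_eq (M := Q.1.primeCompl) heq
    refine ⟨t ^ (n + 1), fun hmem => htP (hPp.mem_of_pow_mem _ hmem), ?_⟩
    rw [LocalizedModule.smul'_mk, ← LocalizedModule.zero_mk (1 : pc R Q),
      LocalizedModule.mk_eq]
    refine ⟨⟨(v : R) * (u : R), mul_mem v.2 u.2⟩, ?_⟩
    have hkill : ((v : R) * (u : R)) • t ^ (n + 1) • x = 0 := by
      rw [smul_smul]
      have h3 : (v : R) * (u : R) * t ^ (n + 1) = (v : R) * c0 * r := by
        linear_combination hv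
      rw [h3, mul_smul, hrx, smul_zero]
    simp only [Submonoid.smul_def, one_smul, smul_zero, Submonoid.coe_one]
    simpa using hkill
  · refine ⟨1, (Ideal.ne_top_iff_one P.1).mp hPp.ne_top, ?_⟩
    rw [one_smul, ← LocalizedModule.zero_mk (1 : pc R Q), LocalizedModule.mk_eq]
    exact ⟨⟨r, hrQ⟩, by simp [Submonoid.smul_def, hrx]⟩

lemma mk_one_add {M : Type u} [AddCommGroup M] [Module R M] (S : Submonoid R) (a b : M) :
    (LocalizedModule.mk (a + b) (1 : S) : LocalizedModule S M) =
      LocalizedModule.mk a 1 + LocalizedModule.mk b 1 := by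
  rw [LocalizedModule.mk_add_mk]
  simp

end AuxLemmas

/-- Part of Theorem 1.9(1): for a torsion module `M`, the canonical images `x/1 ∈ M_P`
vanish for all but finitely many height-one primes `P`, the canonical map
`κ : M → ⊕_{P ∈ 𝒫} M_P` is therefore well defined, and it is a pseudo-isomorphism
(its localization at every `P ∈ 𝒫` is an isomorphism). -/
theorem torsion_canonical_map_to_directSum_of_localizations
    [IsReduced R] (A : Type u) [Ring A] [Algebra R A]
    (hR : IsPseudoNoetherianRing R) (hA : IsPseudoNoetherianOrder R A)
    (M : Type u) [AddCommGroup M] [Module R M] [Module A M] [IsScalarTower R A M]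
    (htors : ∀ x : M, ∃ r ∈ nonZeroDivisors R, r • x = 0) :
    (∀ x : M, {P : {P : Ideal R // IsHeightOnePrime R P} |
        (LocalizedModule.mk x (1 : pc R P) : LocalizedModule (pc R P) M) ≠ 0}.Finite) ∧
    ∃ κ : M →ₗ[R] DirectSum {P : Ideal R // IsHeightOnePrime R P}
        (fun P => LocalizedModule (pc R P) M),
      (∀ (x : M) (P : {P : Ideal R // IsHeightOnePrime R P}),
        κ x P = LocalizedModule.mk x (1 : pc R P)) ∧
      ∀ P : {P : Ideal R // IsHeightOnePrime R P},
        Function.Bijective (LocalizedModule.map (pc R P) κ) := by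
  classical
  set ι := {P : Ideal R // IsHeightOnePrime R P} with hι
  -- finiteness of the support
  have hfin : ∀ x : M, {P : ι |
      (LocalizedModule.mk x (1 : pc R P) : LocalizedModule (pc R P) M) ≠ 0}.Finite := by
    intro x
    obtain ⟨r, hr, hrx⟩ := htors x
    have h1 := (hR r).1
    have hsub : {P : ι |
        (LocalizedModule.mk x (1 : pc R P) : LocalizedModule (pc R P) M) ≠ 0} ⊆
        (fun P : ι => P.1) ⁻¹' (Ideal.span {r} : Ideal R).minimalPrimes := by
      intro P hP
      by_cases hrP : r ∈ P.1
      · exact heightOne_minimal_span hr P.2 hrP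
      · exact absurd (mk_one_eq_zero_of_notMem hrx hrP) hP
    exact (h1.preimage (Subtype.val_injective.injOn)).subset hsub
  refine ⟨hfin, ?_⟩
  -- construction of κ
  have hcomp : ∀ (x : M) (P : ι),
      ((DirectSum.mk (fun P : ι => LocalizedModule (pc R P) M) (hfin x).toFinset
        (fun P => LocalizedModule.mk x 1)) : DirectSum ι fun P => LocalizedModule (pc R P) M)
        P = LocalizedModule.mk x (1 : pc R P) := by
    intro x P
    by_cases h : P ∈ (hfin x).toFinset
    · rw [DirectSum.mk_apply_of_mem h]
    · rw [DirectSum.mk_apply_of_notMem h]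
      rw [Set.Finite.mem_toFinset] at h
      exact (not_not.mp h).symm
  set κ : M →ₗ[R] DirectSum ι (fun P => LocalizedModule (pc R P) M) :=
    { toFun := fun x => DirectSum.mk (fun P : ι => LocalizedModule (pc R P) M)
        (hfin x).toFinset (fun P => LocalizedModule.mk x 1)
      map_add' := by
        intro x y
        refine DFunLike.ext _ _ fun P => ?_
        rw [DirectSum.add_apply, hcomp, hcomp, hcomp, mk_one_add]
      map_smul' := by
        intro r x
        refine DFunLike.ext _ _ fun P => ?_
        rw [RingHom.id_apply, DirectSum.smul_apply, hcomp, hcomp,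
          LocalizedModule.smul'_mk] } with hκ
  have hκapp : ∀ (x : M) (P : ι), κ x P = LocalizedModule.mk x (1 : pc R P) := by
    intro x P; exact hcomp x P
  refine ⟨κ, hκapp, ?_⟩
  intro P
  haveI hPp : P.1.IsPrime := P.2.choose
  set Nmod := DirectSum ι (fun P => LocalizedModule (pc R P) M) with hN
  -- every element of the direct sum is killed away from P by some τ ∉ P
  have hker : ∀ ζ : Nmod, ∃ τ : R, τ ∉ P.1 ∧ ∀ Q : ι, Q ≠ P → (τ • ζ) Q = 0 := by
    intro ζ
    refine DirectSum.induction_on ζ ?_ ?_ ?_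
    · exact ⟨1, (Ideal.ne_top_iff_one P.1).mp hPp.ne_top,
        fun Q _ => by rw [smul_zero, DirectSum.zero_apply]⟩
    · intro Q η
      by_cases hQ : Q = P
      · refine ⟨1, (Ideal.ne_top_iff_one P.1).mp hPp.ne_top, fun Q' hQ' => ?_⟩
        rw [one_smul, DirectSum.of_eq_of_ne _ _ _ (fun h => hQ' (h.trans hQ))]
      · obtain ⟨τ, hτP, hτη⟩ := exists_smul_eq_zero_of_ne hR htors P Q hQ η
        refine ⟨τ, hτP, fun Q' hQ' => ?_⟩
        rw [DirectSum.smul_apply]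
        by_cases hQQ : Q' = Q
        · subst hQQ
          rw [DirectSum.of_eq_same, hτη]
        · rw [DirectSum.of_eq_of_ne _ _ _ hQQ, smul_zero]
    · rintro ζ₁ ζ₂ ⟨τ₁, hτ₁, h₁⟩ ⟨τ₂, hτ₂, h₂⟩
      refine ⟨τ₁ * τ₂, fun hmem => ?_, fun Q hQ => ?_⟩
      · rcases hPp.mem_or_mem hmem with h | h
        · exact hτ₁ h
        · exact hτ₂ h
      · have e1 : (τ₁ * τ₂) • (ζ₁ Q) = 0 := by
          rw [mul_comm, mul_smul, ← DirectSum.smul_apply, h₁ Q hQ, smul_zero]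
        have e2 : (τ₁ * τ₂) • (ζ₂ Q) = 0 := by
          rw [mul_smul, ← DirectSum.smul_apply, h₂ Q hQ, smul_zero]
        rw [DirectSum.smul_apply, DirectSum.add_apply, smul_add, e1, e2, add_zero]
  have hkill : ∀ ζ : Nmod, ζ P = 0 → ∃ τ : R, τ ∉ P.1 ∧ τ • ζ = 0 := by
    intro ζ hζP
    obtain ⟨τ, hτP, hτ⟩ := hker ζ
    refine ⟨τ, hτP, DFunLike.ext _ _ fun Q => ?_⟩
    by_cases hQ : Q = P
    · subst hQ
      rw [DirectSum.smul_apply, hζP, smul_zero, DirectSum.zero_apply]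
    · rw [hτ Q hQ, DirectSum.zero_apply]
  constructor
  · -- injectivity
    rw [injective_iff_map_eq_zero]
    intro z hz
    refine LocalizedModule.induction_on (fun x s => ?_) z hz
    intro hz
    rw [LocalizedModule.map_mk] at hz
    rw [← LocalizedModule.zero_mk (1 : pc R P), LocalizedModule.mk_eq] at hz
    obtain ⟨u, hu⟩ := hz
    simp only [Submonoid.smul_def, one_smul, smul_zero] at hu
    have huP : (u : R) • (κ x) P = 0 := by
      rw [← DirectSum.smul_apply, hu, DirectSum.zero_apply]
    rw [hκapp, LocalizedModule.smul'_mk] at huP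
    rw [← LocalizedModule.zero_mk (1 : pc R P), LocalizedModule.mk_eq] at huP
    obtain ⟨v, hv⟩ := huP
    simp only [Submonoid.smul_def, one_smul, smul_zero, smul_smul] at hv
    rw [← LocalizedModule.zero_mk (1 : pc R P), LocalizedModule.mk_eq]
    refine ⟨v * u, ?_⟩
    simp only [Submonoid.smul_def, one_smul, smul_zero, Submonoid.coe_mul]
    rwa [mul_smul] at hv ⊢
  · -- surjectivity
    intro z
    refine LocalizedModule.induction_on (fun ξ s => ?_) z
    suffices h1 : ∀ ξ : Nmod, ∃ z', LocalizedModule.map (pc R P) κ z' =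
        LocalizedModule.mk ξ (1 : pc R P) by
      obtain ⟨z', hz'⟩ := h1 ξ
      refine ⟨Localization.mk 1 s • z', ?_⟩
      rw [map_smul, hz', LocalizedModule.mk_smul_mk, one_smul, mul_one]
    intro ξ
    refine DirectSum.induction_on ξ ?_ ?_ ?_
    · exact ⟨0, by rw [map_zero, LocalizedModule.zero_mk]⟩
    · intro Q η
      by_cases hQ : Q = P
      · subst hQ
        refine LocalizedModule.induction_on (fun x u => ?_) η
        refine ⟨LocalizedModule.mk x u, ?_⟩
        rw [LocalizedModule.map_mk, LocalizedModule.mk_eq]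
        have hζP : (κ x - (u : R) • DirectSum.of
            (fun P : ι => LocalizedModule (pc R P) M) Q (LocalizedModule.mk x u)) Q = 0 := by
          rw [DirectSum.sub_apply, DirectSum.smul_apply, DirectSum.of_eq_same, hκapp,
            LocalizedModule.smul'_mk, ← Submonoid.smul_def, LocalizedModule.mk_cancel,
            sub_self]
        obtain ⟨τ, hτP, hτ⟩ := hkill _ hζP
        refine ⟨⟨τ, hτP⟩, ?_⟩
        simp only [Submonoid.smul_def, one_smul]
        rw [smul_sub] at hτ
        rw [sub_eq_zero.mp hτ]
      · obtain ⟨τ, hτP, hτη⟩ := exists_smul_eq_zero_of_ne hR htors P Q hQ η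
        refine ⟨0, ?_⟩
        rw [map_zero, eq_comm, ← LocalizedModule.zero_mk (1 : pc R P),
          LocalizedModule.mk_eq]
        refine ⟨⟨τ, hτP⟩, ?_⟩
        simp only [Submonoid.smul_def, one_smul, smul_zero]
        refine DFunLike.ext _ _ fun Q' => ?_
        rw [DirectSum.smul_apply, DirectSum.zero_apply]
        by_cases hQQ : Q' = Q
        · subst hQQ
          rw [DirectSum.of_eq_same, hτη]
        · rw [DirectSum.of_eq_of_ne _ _ _ hQQ, smul_zero]
    · rintro ξ₁ ξ₂ ⟨z₁, hz₁⟩ ⟨z₂, hz₂⟩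
      refine ⟨z₁ + z₂, ?_⟩
      rw [map_add, hz₁, hz₂, ← mk_one_add]

end Stmt8

end PseudoKrull
end

section
/- Assume A is pseudo-krullian. Let 𝔓 ∈ 𝒫(A) with P = 𝔓 ∩ R, let E(U_𝔓) be an injective envelope of U_𝔓, let 𝔞 be a left ideal of A and f : 𝔞 → E(U_𝔓) an A-module homomorphism. If f ≠ 0, then Ker f ∩ R ⊆ P. -/
open scoped TensorProduct

universe u

namespace PseudoKrull

/-- Lemma 2.3: if `f : 𝔞 → E(U_𝔓)` is a nonzero homomorphism from a left ideal of `A`, then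
`Ker f ∩ R ⊆ P`. -/
theorem ker_inter_R_subset_P
    (R : Type u) [CommRing R] [IsReduced R] (A : Type u) [Ring A] [Algebra R A]
    (hR : IsPseudoNoetherianRing R) (hA : IsPseudoNoetherianOrder R A)
    (hK : IsPseudoKrullian R A)
    (𝔓 : TwoSidedIdeal A) (P : Ideal R) (h𝔓 : MemPA R A 𝔓 P)
    (U E : Type u) [AddCommGroup U] [Module A U] [AddCommGroup E] [Module A E]
    (ιU : U →ₗ[A] E) (hU : IsUP R A 𝔓 P U) (hE : IsInjectiveEnvelope A U E ιU)
    (a : Ideal A) (f : ↥a →ₗ[A] E) (hf : f ≠ 0) :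
    ∀ (r : R) (hr : algebraMap R A r ∈ a), f ⟨algebraMap R A r, hr⟩ = 0 → r ∈ P := by
  intro r hr hfr
  by_contra hrP
  set c : A := algebraMap R A r with hc
  have hcomm : ∀ x : A, c * x = x * c := fun x => Algebra.commutes r x
  -- multiplication by c as an A-linear endomorphism of E
  let φ : E →ₗ[A] E :=
    { toFun := fun e => c • e
      map_add' := fun x y => smul_add c x y
      map_smul' := fun a e => by
        simp only [RingHom.id_apply, smul_smul, hcomm a] }
  have hker : LinearMap.ker φ = ⊥ := by
    by_contra h
    have hne := hE.2.2 (LinearMap.ker φ) h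
    rw [Submodule.ne_bot_iff] at hne
    obtain ⟨y, hy, hy0⟩ := hne
    obtain ⟨hyk, u, rfl⟩ := hy
    have hcy : c • ιU u = 0 := hyk
    rw [← map_smul] at hcy
    have hu0 : c • u = 0 := hE.2.1 (by simpa using hcy)
    have hbij := (hU.2.2 r hrP).1
    have : u = 0 := by
      have : (fun u : U => algebraMap R A r • u) u =
          (fun u : U => algebraMap R A r • u) 0 := by
        simpa [hc] using hu0
      exact hbij this
    exact hy0 (by simp [this])
  apply hf
  ext x
  have hx : c • x = (x : A) • (⟨c, hr⟩ : a) := by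
    apply Subtype.ext
    exact hcomm (x : A)
  have h0 : φ (f x) = 0 := by
    show c • f x = 0
    rw [← map_smul, hx, map_smul, hfr, smul_zero]
  have : f x ∈ LinearMap.ker φ := h0
  rw [hker] at this
  simpa using this

end PseudoKrull
end

section
/- Assume A is pseudo-krullian. For every 𝔓 ∈ 𝒫(A) and every index set I, the direct sum E(U_𝔓)^{(I)} of copies of the injective envelope E(U_𝔓) is an injective left A-module. -/
open scoped TensorProduct

universe u

namespace PseudoKrull

section Aux

variable {R : Type u} [CommRing R] {A : Type u} [Ring A] [Algebra R A]

/-- If the span of a set is finitely generated, then a finite subset has the same span. -/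
lemma finset_span_of_fg {B : Type*} [Ring B] {M : Type*} [AddCommGroup M] [Module B M]
    {S : Set M} (h : (Submodule.span B S).FG) :
    ∃ T : Finset M, ↑T ⊆ S ∧ Submodule.span B (T : Set M) = Submodule.span B S := by
  classical
  obtain ⟨t, ht⟩ := h
  have key : ∀ g : M, g ∈ (t : Set M) → ∃ T : Finset M, ↑T ⊆ S ∧
      g ∈ Submodule.span B (T : Set M) := fun g hg =>
    Submodule.mem_span_finite_of_mem_span (ht ▸ Submodule.subset_span hg)
  choose F hF1 hF2 using key
  refine ⟨t.attach.biUnion (fun g => F g.1 (Finset.mem_coe.mpr g.2)), ?_, le_antisymm ?_ ?_⟩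
  · intro x hx
    simp only [Finset.coe_biUnion, Set.mem_iUnion, Finset.mem_coe] at hx
    obtain ⟨g, _, hg⟩ := hx
    exact hF1 _ _ hg
  · refine Submodule.span_le.mpr ?_
    intro x hx
    simp only [Finset.coe_biUnion, Set.mem_iUnion, Finset.mem_coe] at hx
    obtain ⟨g, _, hg⟩ := hx
    exact Submodule.subset_span (hF1 _ _ hg)
  · rw [← ht]
    refine Submodule.span_le.mpr (fun g hg => ?_)
    refine Submodule.span_mono ?_ (hF2 g hg)
    intro x hx
    simp only [Finset.coe_biUnion, Set.mem_iUnion, Finset.mem_coe]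
    exact ⟨⟨g, hg⟩, t.mem_attach _, hx⟩

/-- Multiplication by a scalar coming from `R` on an `A`-module, as an `A`-linear map. -/
def centralSMul (r : R) (M : Type u) [AddCommGroup M] [Module A M] : M →ₗ[A] M where
  toFun x := algebraMap R A r • x
  map_add' x y := smul_add _ x y
  map_smul' a x := by
    simp only [RingHom.id_apply]
    rw [← mul_smul, Algebra.commutes r a, mul_smul]

@[simp] lemma centralSMul_apply (r : R) (M : Type u) [AddCommGroup M] [Module A M] (x : M) :
    centralSMul (A := A) r M x = algebraMap R A r • x := rfl

/-- For `r ∉ P`, multiplication by `r` is bijective on the injective envelope `E` of `U_𝔓`. -/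
lemma smul_bijective_env {P : Ideal R} {𝔓 : TwoSidedIdeal A}
    {U E : Type u} [AddCommGroup U] [Module A U] [AddCommGroup E] [Module A E]
    {ιU : U →ₗ[A] E} (hU : IsUP R A 𝔓 P U) (hE : IsInjectiveEnvelope A U E ιU)
    {r : R} (hr : r ∉ P) :
    Function.Bijective (fun x : E => algebraMap R A r • x) := by
  classical
  set φ : E →ₗ[A] E := centralSMul (A := A) r E with hφ
  have hUbij := hU.2.2 r hr
  have hbot : LinearMap.ker φ ⊓ LinearMap.range ιU = ⊥ := by
    rw [Submodule.eq_bot_iff]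
    rintro x ⟨hk, u, rfl⟩
    have h1 : ιU (algebraMap R A r • u) = 0 := by
      rw [map_smul]; exact hk
    have h2 : algebraMap R A r • u = 0 := by
      apply hE.2.1
      rw [h1, map_zero]
    have h3 : u = 0 := by
      apply hUbij.1
      show algebraMap R A r • u = algebraMap R A r • (0 : U)
      rw [h2, smul_zero]
    rw [h3, map_zero]
  have hker : LinearMap.ker φ = ⊥ := by
    by_contra hne
    exact hE.2.2 _ hne hbot
  have hinj : Function.Injective φ := LinearMap.ker_eq_bot.mp hker
  obtain ⟨ψ, hψ⟩ := hE.1.out φ hinj LinearMap.id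
  set e : E →ₗ[A] E := φ ∘ₗ ψ with he_def
  have he : ∀ x : E, e (φ x) = φ x := by
    intro x
    show φ (ψ (φ x)) = φ x
    rw [hψ x]
    rfl
  have hN : LinearMap.range (e - LinearMap.id) ⊓ LinearMap.range ιU = ⊥ := by
    rw [Submodule.eq_bot_iff]
    rintro x ⟨⟨y, hy⟩, u, hu⟩
    obtain ⟨u', hu'⟩ := hUbij.2 u
    have hxφ : x = φ (ιU u') := by
      rw [← hu, ← hu', map_smul]
      rfl
    have hx1 : e x = x := by rw [hxφ]; exact he (ιU u')
    have hx0 : e x = 0 := by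
      rw [← hy]
      have h4 : e (e y) = e y := he (ψ y)
      simp only [LinearMap.sub_apply, LinearMap.id_apply, map_sub, h4, sub_self]
    rw [← hx1, hx0]
  have hrange : LinearMap.range (e - LinearMap.id) = ⊥ := by
    by_contra hne
    exact hE.2.2 _ hne hN
  have hsurj : Function.Surjective φ := by
    intro x
    refine ⟨ψ x, ?_⟩
    have h5 : (e - LinearMap.id : E →ₗ[A] E) x ∈ LinearMap.range (e - LinearMap.id : E →ₗ[A] E) :=
      LinearMap.mem_range_self _ x
    rw [hrange, Submodule.mem_bot] at h5
    rw [LinearMap.sub_apply, LinearMap.id_apply] at h5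
    exact sub_eq_zero.mp h5
  exact ⟨hinj, hsurj⟩

set_option maxHeartbeats 1000000 in
set_option synthInstance.maxHeartbeats 400000 in
/-- Key finiteness: for each left ideal `𝔞` of `A` there are finitely many elements of `𝔞`
which generate it up to denominators outside `P`. -/
lemma exists_finset_span {P : Ideal R} (hP : P.IsPrime)
    (hN : IsNoetherianRing ((Localization P.primeCompl) ⊗[R] A)) (𝔞 : Ideal A) :
    ∃ s : Finset A, ↑s ⊆ (𝔞 : Set A) ∧
      ∀ a ∈ 𝔞, ∃ r ∈ P.primeCompl, r • a ∈ Submodule.span A (s : Set A) := by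
  classical
  set L := Localization P.primeCompl
  set B := L ⊗[R] A with hB
  let φ : A →ₗ[R] B := TensorProduct.mk R L A 1
  have hloc : IsLocalizedModule P.primeCompl φ :=
    (isLocalizedModule_iff_isBaseChange P.primeCompl L φ).mpr
      (TensorProduct.isBaseChange R A L)
  haveI := hloc
  have hφmul : ∀ c d : A, φ c * φ d = φ (c * d) := by
    intro c d
    show ((1 : L) ⊗ₜ[R] c) * ((1 : L) ⊗ₜ[R] d) = (1 : L) ⊗ₜ[R] (c * d)
    rw [Algebra.TensorProduct.tmul_mul_tmul, one_mul]
  haveI : IsNoetherian B B := isNoetherianRing_iff.mp hN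
  have hfg : (Submodule.span B (φ '' (𝔞 : Set A))).FG :=
    IsNoetherian.noetherian _
  obtain ⟨T, hTsub, hTspan⟩ := finset_span_of_fg hfg
  have hpre : ∀ x : B, x ∈ (T : Set B) → ∃ a : A, a ∈ 𝔞 ∧ φ a = x := by
    intro x hx
    obtain ⟨a, ha, hax⟩ := hTsub hx
    exact ⟨a, ha, hax⟩
  choose pre hpre1 hpre2 using hpre
  refine ⟨T.attach.image (fun x => pre x.1 (Finset.mem_coe.mpr x.2)), ?_, ?_⟩
  · intro a ha
    obtain ⟨x, _, rfl⟩ := Finset.mem_image.mp (Finset.mem_coe.mp ha)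
    exact hpre1 _ _
  · intro a ha
    set s : Finset A := T.attach.image (fun x => pre x.1 (Finset.mem_coe.mpr x.2)) with hs
    have hTs : (T : Set B) ⊆ φ '' (s : Set A) := by
      intro x hx
      refine ⟨pre x hx, ?_, hpre2 x hx⟩
      exact Finset.mem_coe.mpr (Finset.mem_image.mpr
        ⟨⟨x, Finset.mem_coe.mp hx⟩, Finset.mem_attach _ _, rfl⟩)
    have h1 : φ a ∈ Submodule.span B (φ '' (s : Set A)) := by
      have h0 : φ a ∈ Submodule.span B (φ '' (𝔞 : Set A)) :=
        Submodule.subset_span ⟨a, ha, rfl⟩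
      rw [← hTspan] at h0
      exact Submodule.span_mono hTs h0
    have key : ∀ x ∈ Submodule.span B (φ '' (s : Set A)),
        ∃ r ∈ P.primeCompl, ∃ c ∈ Submodule.span A (s : Set A), r • x = φ c := by
      intro x hx
      induction hx using Submodule.span_induction with
      | mem x hxm =>
        obtain ⟨a₀, ha₀, rfl⟩ := hxm
        exact ⟨1, one_mem _, a₀, Submodule.subset_span ha₀, one_smul _ _⟩
      | zero => exact ⟨1, one_mem _, 0, zero_mem _, by simp⟩
      | add x y hx hy ihx ihy =>
        obtain ⟨r, hr, c, hc, hrc⟩ := ihx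
        obtain ⟨r', hr', c', hc', hrc'⟩ := ihy
        have hm1 : r' • c ∈ Submodule.span A (s : Set A) := by
          rw [← algebraMap_smul A r' c]
          exact Submodule.smul_mem _ _ hc
        have hm2 : r • c' ∈ Submodule.span A (s : Set A) := by
          rw [← algebraMap_smul A r c']
          exact Submodule.smul_mem _ _ hc'
        refine ⟨r * r', mul_mem hr hr', r' • c + r • c', Submodule.add_mem _ hm1 hm2, ?_⟩
        have e1 : (r * r') • x = r' • φ c := by rw [mul_comm, mul_smul, hrc]
        have e2 : (r * r') • y = r • φ c' := by rw [mul_smul, hrc']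
        rw [smul_add, e1, e2, ← map_smul, ← map_smul, ← map_add]
      | smul b x hx ih =>
        obtain ⟨r, hr, c, hc, hrc⟩ := ih
        obtain ⟨⟨d, t⟩, hdt⟩ := IsLocalizedModule.surj P.primeCompl φ b
        have hm : d * c ∈ Submodule.span A (s : Set A) := by
          have := Submodule.smul_mem (Submodule.span A (s : Set A)) d hc
          rwa [smul_eq_mul] at this
        refine ⟨(t : R) * r, mul_mem t.2 hr, d * c, hm, ?_⟩
        have hbx : b • x = b * x := rfl
        rw [hbx, mul_smul, ← mul_smul_comm r b x, hrc, ← smul_mul_assoc,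
          ← Submonoid.smul_def, hdt, hφmul]
    obtain ⟨r, hr, c, hc, hrc⟩ := key _ h1
    have hz : φ (r • a - c) = 0 := by
      rw [map_sub, map_smul, hrc, sub_self]
    obtain ⟨t, ht⟩ := (IsLocalizedModule.eq_zero_iff P.primeCompl φ).mp hz
    refine ⟨(t : R) * r, mul_mem t.2 hr, ?_⟩
    have ht' : (t : R) • (r • a) = (t : R) • c := by
      have := ht
      rw [Submonoid.smul_def, smul_sub, sub_eq_zero] at this
      exact this
    rw [mul_smul, ht', ← algebraMap_smul A (t : R) c]
    exact Submodule.smul_mem _ _ hc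

end Aux


/-- Claim in Theorem 2.4: every direct sum of copies of `E(U_𝔓)` with `𝔓 ∈ 𝒫(A)` is an
injective `A`-module. -/
theorem injective_directSum_of_copies_of_envelope
    (R : Type u) [CommRing R] [IsReduced R] (A : Type u) [Ring A] [Algebra R A]
    (hR : IsPseudoNoetherianRing R) (hA : IsPseudoNoetherianOrder R A)
    (hK : IsPseudoKrullian R A)
    (𝔓 : TwoSidedIdeal A) (P : Ideal R) (h𝔓 : MemPA R A 𝔓 P)
    (U E : Type u) [AddCommGroup U] [Module A U] [AddCommGroup E] [Module A E]
    (ιU : U →ₗ[A] E) (hU : IsUP R A 𝔓 P U) (hE : IsInjectiveEnvelope A U E ιU)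
    (I : Type u) :
    Module.Injective A (DirectSum I (fun _ => E)) := by
  classical
  obtain ⟨hP, hht⟩ := h𝔓.2.1
  have hP1 : IsHeightLEOnePrime R P := ⟨hP, le_of_eq hht⟩
  have hN : IsNoetherianRing ((Localization P.primeCompl) ⊗[R] A) :=
    hA.locNoetherian P hP1 hP
  apply Module.Baer.injective
  intro 𝔞 f
  obtain ⟨s, hs𝔞, hs⟩ := exists_finset_span hP hN 𝔞
  set M := DirectSum I (fun _ => E) with hM
  -- the finite set of indices supporting the images of the chosen generators
  set S₀ : Finset I :=
    s.attach.biUnion (fun a => (f ⟨a.1, hs𝔞 (Finset.mem_coe.mpr a.2)⟩).support) with hS₀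
  -- images of elements of the ideal are supported on `S₀`
  have claim : ∀ (x : A) (hx : x ∈ 𝔞), ∀ j ∉ S₀, f ⟨x, hx⟩ j = 0 := by
    intro x hx j hj
    -- the kernel trick: the set of elements of `𝔞` whose image vanishes at `j`
    set K : Submodule A A := Submodule.map 𝔞.subtype
      (LinearMap.ker ((DirectSum.component A I (fun _ => E) j).comp f)) with hK
    have hsK : (s : Set A) ⊆ (K : Set A) := by
      intro a ha
      have hfj0 : ((DirectSum.component A I (fun _ => E) j).comp f) ⟨a, hs𝔞 ha⟩ = 0 := by
        show f ⟨a, hs𝔞 ha⟩ j = 0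
        by_contra hne
        apply hj
        rw [hS₀]
        refine Finset.mem_biUnion.mpr ⟨⟨a, Finset.mem_coe.mp ha⟩, Finset.mem_attach _ _, ?_⟩
        exact DFinsupp.mem_support_iff.mpr hne
      exact Submodule.mem_map.mpr ⟨⟨a, hs𝔞 ha⟩, LinearMap.mem_ker.mpr hfj0, rfl⟩
    obtain ⟨r, hr, hrx⟩ := hs x hx
    have hrK : r • x ∈ K := Submodule.span_le.mpr hsK hrx
    obtain ⟨z, hz0, hz⟩ := Submodule.mem_map.mp hrK
    have hze : z = algebraMap R A r • (⟨x, hx⟩ : ↥𝔞) := by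
      apply Subtype.ext
      show (z : A) = algebraMap R A r • x
      exact hz.trans (algebraMap_smul A r x).symm
    have h0 : algebraMap R A r • (f ⟨x, hx⟩ j) = 0 := by
      have := LinearMap.mem_ker.mp hz0
      rw [hze] at this
      have h' : ((DirectSum.component A I (fun _ => E) j).comp f) (algebraMap R A r • (⟨x, hx⟩ : ↥𝔞))
          = algebraMap R A r • (f ⟨x, hx⟩ j) := by
        rw [map_smul]; rfl
      rw [h'] at this
      exact this
    have hrP : r ∉ P := hr
    have hbij := smul_bijective_env hU hE hrP
    apply hbij.1
    show algebraMap R A r • (f ⟨x, hx⟩ j) = algebraMap R A r • (0 : E)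
    rw [h0, smul_zero]
  -- extend each component using injectivity of `E`
  have hsub : Function.Injective (𝔞.subtype) := Subtype.val_injective
  have hext : ∀ j : I, ∃ g : A →ₗ[A] E, ∀ x : ↥𝔞, g (x : A) = f x j := by
    intro j
    obtain ⟨h, hh⟩ := hE.1.out (𝔞.subtype) hsub
      ((DirectSum.component A I (fun _ => E) j).comp f)
    exact ⟨h, fun x => hh x⟩
  choose g hg using hext
  refine ⟨∑ j ∈ S₀, (DirectSum.lof A I (fun _ => E) j).comp (g j), ?_⟩
  intro x hx
  have h1 : (∑ j ∈ S₀, (DirectSum.lof A I (fun _ => E) j).comp (g j)) x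
      = ∑ j ∈ S₀, DirectSum.lof A I (fun _ => E) j (f ⟨x, hx⟩ j) := by
    rw [LinearMap.sum_apply]
    refine Finset.sum_congr rfl (fun j _ => ?_)
    rw [LinearMap.comp_apply, hg j ⟨x, hx⟩]
  rw [h1]
  have hsupp : (f ⟨x, hx⟩).support ⊆ S₀ := by
    intro j hj
    by_contra hjn
    exact (DFinsupp.mem_support_iff.mp hj) (claim x hx j hjn)
  have h2 : ∑ j ∈ (f ⟨x, hx⟩).support, DirectSum.lof A I (fun _ => E) j (f ⟨x, hx⟩ j)
      = ∑ j ∈ S₀, DirectSum.lof A I (fun _ => E) j (f ⟨x, hx⟩ j) := by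
    refine Finset.sum_subset hsupp (fun j _ hj => ?_)
    rw [DFinsupp.notMem_support_iff.mp hj, map_zero]
  rw [← h2]
  have h3 : ∀ j, DirectSum.lof A I (fun _ => E) j (f ⟨x, hx⟩ j)
      = DirectSum.of (fun _ : I => E) j (f ⟨x, hx⟩ j) := fun j => rfl
  simp_rw [h3]
  exact DirectSum.sum_support_of _

end PseudoKrull
end
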